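/- arXiv:1510.04529 — 2 statements merged into one kernel-verified Lean document; each statement's English description precedes it below -/
import Mathlib

section
/- For the Bernoulli D-norm with parameter β ∈ (0,1], one has ‖(1,...,1)‖_{B_β} = (1 - (1-β)^d)/β, and as β → 0 the norm ‖x‖_{B_β} converges to ‖x‖_1 = Σ_i |x_i| for every x ∈ ℝ^d, while for β = 1, ‖x‖_{B_1} = max_i |x_i|. -/
/-!
Extending `max_{i∈T} |x_i|` by `0` at `T = ∅` turns the norm into a polynomial in `β` summed
over all subsets `T`. Multiplied by `β` it becomes `Σ_T β^{|T|}(1-β)^{d-|T|} max_{i∈T}|x_i|`,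
so at `x = (1,…,1)` the binomial theorem gives `1 - (1-β)^d`. At `β = 0` only the singletons
survive, giving `‖x‖_1`, and continuity in `β` yields the limit; at `β = 1` only `T = {1,…,d}`
survives.
-/

open Finset Filter

/-- The Bernoulli D-norm `‖x‖_{B_β} = Σ_{∅≠T⊆{1,…,d}} β^{|T|-1}(1-β)^{d-|T|} max_{i∈T}|x_i|`. -/
noncomputable def bernoulliDNorm (d : ℕ) (β : ℝ) (x : Fin d → ℝ) : ℝ :=
  ∑ T ∈ (Finset.univ.powerset.filter (fun T : Finset (Fin d) => T ≠ ∅)).attach,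
    β ^ (T.1.card - 1) * (1 - β) ^ (d - T.1.card) *
      T.1.sup' (Finset.nonempty_iff_ne_empty.mpr (Finset.mem_filter.mp T.2).2)
        (fun i => |x i|)

noncomputable def maxAbs {ι : Type*} (x : ι → ℝ) (T : Finset ι) : ℝ :=
  if h : T.Nonempty then T.sup' h (fun i => |x i|) else 0

section maxAbs

variable {ι : Type*} (x : ι → ℝ)

theorem maxAbs_of_nonempty {T : Finset ι} (h : T.Nonempty) :
    maxAbs x T = T.sup' h (fun i => |x i|) :=
  dif_pos h

@[simp]
theorem maxAbs_empty : maxAbs x ∅ = 0 :=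
  dif_neg Finset.not_nonempty_empty

@[simp]
theorem maxAbs_singleton (i : ι) : maxAbs x {i} = |x i| := by
  simp [maxAbs_of_nonempty x (singleton_nonempty i)]

theorem maxAbs_const_one {T : Finset ι} (h : T.Nonempty) : maxAbs (fun _ => (1 : ℝ)) T = 1 := by
  simp [maxAbs_of_nonempty _ h]

end maxAbs

section bernoulliDNorm

variable {d : ℕ} (β : ℝ) (x : Fin d → ℝ)

theorem bernoulliDNorm_eq_sum :
    bernoulliDNorm d β x =
      ∑ T : Finset (Fin d), β ^ (#T - 1) * (1 - β) ^ (d - #T) * maxAbs x T := by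
  have hfilter : univ.powerset.filter (fun T : Finset (Fin d) => T ≠ ∅) = univ.erase ∅ := by
    ext T
    simp [and_comm]
  rw [← Finset.sum_erase _ (a := ∅) (by simp), ← hfilter,
    ← Finset.sum_attach _ fun T => β ^ (#T - 1) * (1 - β) ^ (d - #T) * maxAbs x T]
  refine Finset.sum_congr rfl fun T _ => ?_
  rw [maxAbs_of_nonempty]

theorem mul_bernoulliDNorm :
    β * bernoulliDNorm d β x = ∑ T : Finset (Fin d), β ^ #T * (1 - β) ^ (d - #T) * maxAbs x T := by
  rw [bernoulliDNorm_eq_sum, Finset.mul_sum]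
  refine Finset.sum_congr rfl fun T _ => ?_
  rcases T.eq_empty_or_nonempty with rfl | hT
  · simp
  · rw [← mul_assoc, ← mul_assoc, ← pow_succ', Nat.sub_add_cancel hT.card_pos]

theorem bernoulliDNorm_const_one (hβ : β ≠ 0) :
    bernoulliDNorm d β (fun _ => 1) = (1 - (1 - β) ^ d) / β := by
  have hsum : ∑ T : Finset (Fin d), β ^ #T * (1 - β) ^ (d - #T) = 1 := by
    simpa using Fin.sum_pow_mul_eq_add_pow β (1 - β)
  have hmul : β * bernoulliDNorm d β (fun _ => 1) = 1 - (1 - β) ^ d := calc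
    _ = ∑ T : Finset (Fin d), β ^ #T * (1 - β) ^ (d - #T) * maxAbs (fun _ => 1) T :=
      mul_bernoulliDNorm β _
    _ = ∑ T ∈ univ.erase ∅, β ^ #T * (1 - β) ^ (d - #T) := by
      rw [← Finset.sum_erase _ (a := ∅) (by simp)]
      refine Finset.sum_congr rfl fun T hT => ?_
      rw [maxAbs_const_one (nonempty_iff_ne_empty.mpr (ne_of_mem_erase hT)), mul_one]
    _ = 1 - (1 - β) ^ d := by
      rw [Finset.sum_erase_eq_sub (mem_univ _), hsum]
      simp
  rw [← hmul, mul_div_cancel_left₀ _ hβ]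

theorem continuous_bernoulliDNorm : Continuous fun β => bernoulliDNorm d β x := by
  simp_rw [bernoulliDNorm_eq_sum]
  fun_prop

theorem bernoulliDNorm_zero_eq_sum_abs : bernoulliDNorm d 0 x = ∑ i, |x i| := by
  have hterm : ∀ T : Finset (Fin d),
      (0 : ℝ) ^ (#T - 1) * (1 - 0) ^ (d - #T) * maxAbs x T = if #T = 1 then maxAbs x T else 0 := by
    intro T
    rcases T.eq_empty_or_nonempty with rfl | hT
    · simp
    · have := hT.card_pos
      split_ifs with h1
      · simp [h1]
      · simp [zero_pow (show #T - 1 ≠ 0 by omega)]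
  rw [bernoulliDNorm_eq_sum, Finset.sum_congr rfl fun T _ => hterm T, ← Finset.sum_filter,
    ← powerset_univ, ← powersetCard_eq_filter, powersetCard_one, sum_map]
  simp

theorem bernoulliDNorm_one_eq_maxAbs : bernoulliDNorm d 1 x = maxAbs x univ := by
  rw [bernoulliDNorm_eq_sum, Finset.sum_eq_single_of_mem univ (mem_univ _)]
  · simp
  · intro T _ hT
    have : #T < d := by simpa using card_lt_card (ssubset_univ_iff.mpr hT)
    simp [zero_pow (show d - #T ≠ 0 by omega)]

end bernoulliDNorm

/-- For the Bernoulli D-norm with `β ∈ (0,1]`: its value at `(1,…,1)` is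
`(1-(1-β)^d)/β`; as `β → 0⁺` it converges to the `ℓ¹`-norm; and at `β = 1` it is the
maximum norm. -/
theorem bernoulliDNorm_props (d : ℕ) (hd : 0 < d) (β : ℝ) (hβ : β ∈ Set.Ioc (0 : ℝ) 1)
    (x : Fin d → ℝ) :
    bernoulliDNorm d β (fun _ => 1) = (1 - (1 - β) ^ d) / β ∧
    Tendsto (fun b : ℝ => bernoulliDNorm d b x) (nhdsWithin 0 (Set.Ioi 0))
      (nhds (∑ i, |x i|)) ∧
    bernoulliDNorm d 1 x =
      Finset.univ.sup' (Finset.univ_nonempty_iff.mpr ⟨⟨0, hd⟩⟩) (fun i => |x i|) := by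
  refine ⟨bernoulliDNorm_const_one β hβ.1.ne', ?_, ?_⟩
  · rw [← bernoulliDNorm_zero_eq_sum_abs]
    exact ((continuous_bernoulliDNorm x).tendsto 0).mono_left nhdsWithin_le_nhds
  · rw [bernoulliDNorm_one_eq_maxAbs, maxAbs_of_nonempty]
end

section
/- Let X = (X_1, ..., X_d) follow a copula on ℝ^d, d ≥ 2, and suppose there exist indices k ≠ j and a constant χ̄ ∈ (−1, 1) such that log(P(X_k > u, X_j > u)) / (2 log(1−u)) → 1/(1+χ̄) as u ↑ 1. Then ∫_1^∞ P(X_i > 1 − 1/t, 1 ≤ i ≤ d) dt < ∞, and hence E(N(2)) < ∞. -/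
open MeasureTheory ProbabilityTheory Filter
open scoped ENNReal NNReal

lemma aux_summable_pow {b : ℝ} (hb0 : 0 < b) (hb1 : b < 1) :
    Summable (fun n : ℕ => (1 - (n : ℝ) ^ (-b)) ^ n) := by
  rw [← summable_nat_add_iff 1]
  set c : ℝ := 1 - b with hc
  have hc0 : 0 < c := by simp only [hc]; linarith
  set k : ℕ := ⌈(2 : ℝ) / c⌉₊ with hk
  have hck : (2 : ℝ) ≤ c * k := by
    have h := Nat.le_ceil ((2 : ℝ) / c)
    calc (2:ℝ) = c * (2 / c) := by field_simp
    _ ≤ c * k := by nlinarith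
  have hsum : Summable (fun n : ℕ => (k.factorial : ℝ) * (1 / ((n + 1 : ℕ) : ℝ) ^ (2:ℕ))) := by
    have h0 : Summable (fun n : ℕ => 1 / ((n : ℝ)) ^ (2:ℕ)) :=
      Real.summable_one_div_nat_pow.2 one_lt_two
    exact ((summable_nat_add_iff 1).2 h0).mul_left _
  refine hsum.of_nonneg_of_le ?_ ?_
  · intro n
    have hn1 : (1 : ℝ) ≤ ((n + 1 : ℕ) : ℝ) := by
      exact_mod_cast Nat.one_le_iff_ne_zero.2 (Nat.succ_ne_zero n)
    have hx1 : ((n + 1 : ℕ) : ℝ) ^ (-b) ≤ 1 :=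
      Real.rpow_le_one_of_one_le_of_nonpos hn1 (by linarith)
    exact pow_nonneg (by linarith) _
  · intro n
    set m : ℝ := ((n + 1 : ℕ) : ℝ) with hm
    have hm1 : (1 : ℝ) ≤ m := by
      rw [hm]; exact_mod_cast Nat.one_le_iff_ne_zero.2 (Nat.succ_ne_zero n)
    have hm0 : 0 < m := by linarith
    set x : ℝ := m ^ (-b) with hx
    have hx0 : 0 < x := Real.rpow_pos_of_pos hm0 _
    have hx1 : x ≤ 1 := Real.rpow_le_one_of_one_le_of_nonpos hm1 (by linarith)
    have h1 : (1 - x) ^ (n + 1) ≤ Real.exp (-x) ^ (n + 1) := by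
      apply pow_le_pow_left₀ (by linarith)
      linarith [Real.add_one_le_exp (-x)]
    have h2 : Real.exp (-x) ^ (n + 1) = Real.exp (-(((n+1:ℕ):ℝ) * x)) := by
      rw [← Real.exp_nat_mul]; ring_nf
    have h3 : m * x = m ^ c := by
      rw [hx]
      nth_rewrite 1 [← Real.rpow_one m]
      rw [← Real.rpow_add hm0, hc]; ring_nf
    have h5 : m ^ (2:ℕ) ≤ (m ^ c) ^ k := by
      rw [← Real.rpow_natCast (m ^ c) k, ← Real.rpow_mul hm0.le, ← Real.rpow_natCast m 2]
      exact Real.rpow_le_rpow_of_exponent_le hm1 (by exact_mod_cast hck)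
    have h4 : Real.exp (-(m * x)) ≤ (k.factorial : ℝ) * (1 / m ^ (2:ℕ)) := by
      rw [h3, Real.exp_neg]
      have hexp : (m ^ c) ^ k / (k.factorial : ℝ) ≤ Real.exp (m ^ c) :=
        Real.pow_div_factorial_le_exp _ (Real.rpow_nonneg hm0.le _) k
      have hfac : (0:ℝ) < k.factorial := by exact_mod_cast k.factorial_pos
      have hm2 : (0:ℝ) < m ^ (2:ℕ) := by positivity
      have h6 : m ^ (2:ℕ) / (k.factorial : ℝ) ≤ Real.exp (m ^ c) :=
        le_trans (by gcongr) hexp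
      rw [inv_le_iff_one_le_mul₀ (Real.exp_pos _)]
      calc (1:ℝ) = (m ^ (2:ℕ) / (k.factorial : ℝ)) * ((k.factorial : ℝ) * (1 / m ^ (2:ℕ))) := by
            field_simp
      _ ≤ Real.exp (m ^ c) * ((k.factorial : ℝ) * (1 / m ^ (2:ℕ))) := by
            apply mul_le_mul_of_nonneg_right h6; positivity
      _ = (↑k.factorial * (1 / m ^ (2:ℕ))) * Real.exp (m ^ c) := by ring
    calc (1 - x) ^ (n + 1) ≤ Real.exp (-(((n+1:ℕ):ℝ) * x)) := h1.trans_eq h2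
    _ = Real.exp (-(m * x)) := by rw [hm]
    _ ≤ _ := h4


lemma aux_nonneg {b : ℝ} (hb0 : 0 < b) (n : ℕ) : 0 ≤ (1 - (n : ℝ) ^ (-b)) ^ n := by
  apply pow_nonneg
  rcases Nat.eq_zero_or_pos n with h | h
  · simp [h, Real.zero_rpow (neg_ne_zero.2 hb0.ne')]
  · have h1 : (1:ℝ) ≤ (n:ℝ) := by exact_mod_cast h
    have := Real.rpow_le_one_of_one_le_of_nonpos h1 (neg_nonpos.2 hb0.le)
    linarith

/-- If some pair of components `(X_k, X_j)` of a copula has tail-dependence coefficient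
`χ̄ ∈ (−1,1)`, i.e. `log P(X_k > u, X_j > u) / (2 log(1−u)) → 1/(1+χ̄)` as `u ↑ 1`, then
`∫_1^∞ P(X_i > 1 − 1/t ∀i) dt < ∞` and hence `E(N(2)) < ∞`. -/
theorem finite_expectation_of_tail_independence
    {Ω : Type*} [MeasurableSpace Ω] (P : Measure Ω) [IsProbabilityMeasure P]
    (d : ℕ) (hd : 2 ≤ d) (X : ℕ → Ω → (Fin d → ℝ))
    (hmeas : ∀ j, Measurable (X j))
    (hindep : iIndepFun X P)
    (hident : ∀ j l, Measure.map (X j) P = Measure.map (X l) P)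
    (hunif : ∀ i, ∀ t ∈ Set.Icc (0 : ℝ) 1,
      P {ω | X 1 ω i ≤ t} = ENNReal.ofReal t)
    (k j : Fin d) (hkj : k ≠ j) (χ : ℝ) (hχ : χ ∈ Set.Ioo (-1 : ℝ) 1)
    (htail : Tendsto
      (fun u : ℝ =>
        Real.log ((P {ω | u < X 1 ω k ∧ u < X 1 ω j}).toReal) / (2 * Real.log (1 - u)))
      (nhdsWithin 1 (Set.Iio 1)) (nhds (1 / (1 + χ)))) :
    (∫⁻ t in Set.Ioi (1 : ℝ), P {ω | ∀ i, 1 - 1 / t < X 1 ω i} < ⊤) ∧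
    (∫⁻ ω, ((sInf {j' : ℕ | 2 ≤ j' ∧ ∃ i, X 1 ω i < X j' ω i} : ℕ) : ENNReal) ∂P < ⊤) := by
  obtain ⟨hχ1, hχ2⟩ := hχ
  have hχ0 : 0 < 1 + χ := by linarith
  set c : ℝ := 1 / (1 + χ) with hcdef
  have hc : 1/2 < c := by
    rw [hcdef]
    rw [div_lt_div_iff₀ (by norm_num) hχ0]
    linarith
  set a : ℝ := 1/2 + c with hadef
  have ha1 : 1 < a := by simp only [hadef]; linarith
  have ha0 : 0 < a := by linarith
  have hac : a / 2 < c := by simp only [hadef]; linarith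
  -- eventual bound on the pair probability
  have hbound : ∀ᶠ u in nhdsWithin 1 (Set.Iio 1),
      P {ω | u < X 1 ω k ∧ u < X 1 ω j} ≤ ENNReal.ofReal ((1 - u) ^ a) := by
    have h1 := htail.eventually (eventually_gt_nhds hac)
    have h2 : ∀ᶠ u : ℝ in nhdsWithin 1 (Set.Iio 1), (0:ℝ) < u :=
      eventually_nhdsWithin_of_eventually_nhds (eventually_gt_nhds one_pos)
    have h3 : ∀ᶠ u : ℝ in nhdsWithin 1 (Set.Iio 1), u < 1 :=
      eventually_mem_nhdsWithin
    filter_upwards [h1, h2, h3] with u hu1 hu2 hu3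
    set p : ℝ := (P {ω | u < X 1 ω k ∧ u < X 1 ω j}).toReal with hpdef
    have hL : Real.log (1 - u) < 0 := Real.log_neg (by linarith) (by linarith)
    have hlogp : Real.log p < a * Real.log (1 - u) := by
      have h2L : 2 * Real.log (1 - u) < 0 := by linarith
      have := (lt_div_iff_of_neg h2L).1 hu1
      calc Real.log p < a / 2 * (2 * Real.log (1 - u)) := this
      _ = a * Real.log (1 - u) := by ring
    have hp0 : 0 < p := by
      by_contra hcon
      push_neg at hcon
      have hp00 : p = 0 := le_antisymm hcon (hpdef ▸ ENNReal.toReal_nonneg)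
      rw [hp00] at hlogp
      simp only [Real.log_zero] at hlogp
      nlinarith
    have hple : p ≤ (1 - u) ^ a := by
      have : p = Real.exp (Real.log p) := (Real.exp_log hp0).symm
      rw [this, Real.rpow_def_of_pos (by linarith : (0:ℝ) < 1 - u)]
      exact (Real.exp_le_exp.2 (by linarith)).trans_eq rfl
    calc P {ω | u < X 1 ω k ∧ u < X 1 ω j} = ENNReal.ofReal p :=
          (ENNReal.ofReal_toReal (measure_ne_top P _)).symm
    _ ≤ ENNReal.ofReal ((1 - u) ^ a) := ENNReal.ofReal_le_ofReal hple
  -- extract a threshold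
  obtain ⟨u₀, hu₀1, hsub⟩ := mem_nhdsLT_iff_exists_Ioo_subset.1 hbound
  set v : ℝ := max u₀ 0 with hvdef
  have hv1 : v < 1 := max_lt hu₀1 one_pos
  have hv0 : (0:ℝ) ≤ v := le_max_right _ _
  have hbound' : ∀ u : ℝ, v < u → u < 1 →
      P {ω | u < X 1 ω k ∧ u < X 1 ω j} ≤ ENNReal.ofReal ((1 - u) ^ a) := by
    intro u h1 h2
    exact hsub ⟨lt_of_le_of_lt (le_max_left _ _) h1, h2⟩
  have hpair : ∀ u : ℝ, P {ω | ∀ i, u < X 1 ω i} ≤ P {ω | u < X 1 ω k ∧ u < X 1 ω j} := by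
    intro u
    exact measure_mono (fun ω hω => ⟨hω k, hω j⟩)
  constructor
  · -- first conjunct
    set T : ℝ := max 2 (1 / (1 - v)) with hTdef
    have hT1 : (1:ℝ) ≤ T := le_trans one_le_two (le_max_left _ _)
    have hT0 : (0:ℝ) < T := lt_of_lt_of_le one_pos hT1
    set g : ℝ → ℝ≥0∞ := fun t => if t ≤ T then 1 else ENNReal.ofReal (t ^ (-a)) with hgdef
    have hg1 : ∀ t, P {ω | ∀ i, 1 - 1/t < X 1 ω i} ≤ g t := by
      intro t
      by_cases ht : t ≤ T
      · simp only [hgdef, if_pos ht]; exact prob_le_one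
      · push_neg at ht
        simp only [hgdef, if_neg (not_le.2 ht)]
        have ht1 : (1:ℝ) < t := lt_of_le_of_lt hT1 ht
        have ht0 : (0:ℝ) < t := by linarith
        have hu1 : 1 - 1/t < 1 := by
          have h0t : 0 < 1/t := by positivity
          linarith
        have hu2 : v < 1 - 1/t := by
          have h1v : (0:ℝ) < 1 - v := by linarith
          have hvt : 1 / (1 - v) < t := lt_of_le_of_lt (le_max_right _ _) ht
          have h1t : 1 / t < 1 - v := by
            rw [div_lt_iff₀ ht0]
            rw [div_lt_iff₀ h1v] at hvt
            nlinarith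
          linarith
        calc P {ω | ∀ i, 1 - 1/t < X 1 ω i}
            ≤ P {ω | 1 - 1/t < X 1 ω k ∧ 1 - 1/t < X 1 ω j} := hpair _
        _ ≤ ENNReal.ofReal ((1 - (1 - 1/t)) ^ a) := hbound' _ hu2 hu1
        _ = ENNReal.ofReal (t ^ (-a)) := by
            congr 1
            rw [show (1 - (1 - 1/t)) = t⁻¹ by ring]
            rw [Real.inv_rpow ht0.le, ← Real.rpow_neg ht0.le]
    refine lt_of_le_of_lt (lintegral_mono hg1) ?_
    rw [← Set.Ioc_union_Ioi_eq_Ioi hT1,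
      lintegral_union measurableSet_Ioi Set.Ioc_disjoint_Ioi_same]
    refine ENNReal.add_lt_top.2 ⟨?_, ?_⟩
    · have hgle : ∀ t : ℝ, g t ≤ 1 := by
        intro t
        by_cases ht : t ≤ T
        · simp only [hgdef, if_pos ht]; exact le_rfl
        · push_neg at ht
          simp only [hgdef, if_neg (not_le.2 ht)]
          rw [ENNReal.ofReal_le_one]
          exact Real.rpow_le_one_of_one_le_of_nonpos (le_trans hT1 ht.le) (by linarith)
      calc ∫⁻ t in Set.Ioc 1 T, g t ≤ ∫⁻ _ in Set.Ioc 1 T, (1:ℝ≥0∞) :=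
            lintegral_mono hgle
      _ = volume (Set.Ioc 1 T) := by rw [setLIntegral_const]; ring
      _ < ⊤ := measure_Ioc_lt_top
    · have hint : IntegrableOn (fun t : ℝ => t ^ (-a)) (Set.Ioi T) :=
        integrableOn_Ioi_rpow_of_lt (by linarith) hT0
      have hfin := hint.2
      refine lt_of_le_of_lt ?_ hfin
      refine setLIntegral_mono' measurableSet_Ioi ?_
      intro t ht
      simp only [hgdef, if_neg (not_le.2 (Set.mem_Ioi.1 ht))]
      exact Real.ofReal_le_enorm _
  · -- second conjunct
    set b : ℝ := (1 + a⁻¹)/2 with hbdef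
    have hainv1 : a⁻¹ < 1 := inv_lt_one_of_one_lt₀ ha1
    have hainv0 : 0 < a⁻¹ := by positivity
    have hb0 : 0 < b := by simp only [hbdef]; linarith
    have hb1 : b < 1 := by simp only [hbdef]; linarith
    have hab : 1 < a * b := by
      have ha' : a * a⁻¹ = 1 := mul_inv_cancel₀ (by linarith)
      have hab' : a * b = (a + 1)/2 := by
        simp only [hbdef]; field_simp
      rw [hab']; linarith
    set u : ℕ → ℝ := fun n => 1 - (n:ℝ) ^ (-b) with hudef
    have hlim : Tendsto (fun n : ℕ => ((n:ℝ)) ^ (-b)) atTop (nhds 0) :=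
      (tendsto_rpow_neg_atTop hb0).comp tendsto_natCast_atTop_atTop
    have hev : ∀ᶠ n : ℕ in atTop, (n:ℝ) ^ (-b) < 1 - v :=
      hlim.eventually (gt_mem_nhds (by linarith : (0:ℝ) < 1 - v))
    obtain ⟨N₁, hN₁⟩ := eventually_atTop.1 hev
    set N₀ : ℕ := max N₁ 1 with hN₀def
    have hN₀1 : 1 ≤ N₀ := le_max_right _ _
    have hun : ∀ n, N₀ ≤ n → v < u n ∧ u n < 1 ∧ 1 ≤ n := by
      intro n hn
      have h1 : 1 ≤ n := le_trans hN₀1 hn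
      have h2 := hN₁ n (le_trans (le_max_left _ _) hn)
      have hn1 : (1:ℝ) ≤ (n:ℝ) := by exact_mod_cast h1
      have hpos : 0 < (n:ℝ) ^ (-b) := Real.rpow_pos_of_pos (by linarith) _
      exact ⟨by simp only [hudef]; linarith, by simp only [hudef]; linarith, h1⟩
    set B : ℕ → Set Ω := fun n =>
      if n < N₀ then Set.univ else
        (X 1 ⁻¹' {x | u n < x k ∧ u n < x j}) ∪
        (⋂ m ∈ Finset.Icc 1 n, X m ⁻¹' {x | x k ≤ u n}) ∪
        (⋂ m ∈ Finset.Icc 1 n, X m ⁻¹' {x | x j ≤ u n}) with hBdef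
    have hmeask : ∀ (i : Fin d) (r : ℝ), MeasurableSet {x : Fin d → ℝ | x i ≤ r} :=
      fun i r => measurableSet_le (measurable_pi_apply i) measurable_const
    have hBmeas : ∀ n, MeasurableSet (B n) := by
      intro n
      simp only [hBdef]
      split
      · exact MeasurableSet.univ
      · refine MeasurableSet.union (MeasurableSet.union ((hmeas 1) ?_)
          (Finset.measurableSet_biInter _ fun m _ => (hmeas m) (hmeask k _)))
          (Finset.measurableSet_biInter _ fun m _ => (hmeas m) (hmeask j _))
        exact (measurableSet_lt measurable_const (measurable_pi_apply k)).inter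
          (measurableSet_lt measurable_const (measurable_pi_apply j))
    have hpoint : ∀ ω, ((sInf {j' : ℕ | 2 ≤ j' ∧ ∃ i, X 1 ω i < X j' ω i} : ℕ) : ℝ≥0∞) ≤
        ∑' n, (B n).indicator (fun _ => (1:ℝ≥0∞)) ω := by
      intro ω
      set S : Set ℕ := {j' : ℕ | 2 ≤ j' ∧ ∃ i, X 1 ω i < X j' ω i} with hSdef
      have key : ∀ n, n < sInf S → ω ∈ B n := by
        intro n hn
        by_cases hn0 : n < N₀
        · simp [hBdef, hn0]
        · push_neg at hn0
          obtain ⟨hv_u, hu_1, hn1⟩ := hun n hn0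
          have hnotin : ∀ m, 2 ≤ m → m ≤ n → ∀ i, X m ω i ≤ X 1 ω i := by
            intro m hm2 hmn i
            by_contra hcon
            push_neg at hcon
            have hmem : m ∈ S := ⟨hm2, i, hcon⟩
            have := Nat.sInf_le hmem
            omega
          simp only [hBdef, if_neg (not_lt.2 hn0)]
          by_cases hk' : u n < X 1 ω k ∧ u n < X 1 ω j
          · exact Or.inl (Or.inl hk')
          · rw [not_and_or] at hk'
            rcases hk' with hk' | hk'
            · push_neg at hk'
              refine Or.inl (Or.inr ?_)
              simp only [Set.mem_iInter, Set.mem_preimage, Set.mem_setOf_eq, Finset.mem_Icc]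
              rintro m ⟨hm1, hm2⟩
              rcases eq_or_lt_of_le hm1 with h | h
              · rw [← h]; exact hk'
              · exact le_trans (hnotin m h hm2 k) hk'
            · push_neg at hk'
              refine Or.inr ?_
              simp only [Set.mem_iInter, Set.mem_preimage, Set.mem_setOf_eq, Finset.mem_Icc]
              rintro m ⟨hm1, hm2⟩
              rcases eq_or_lt_of_le hm1 with h | h
              · rw [← h]; exact hk'
              · exact le_trans (hnotin m h hm2 j) hk'
      calc ((sInf S : ℕ) : ℝ≥0∞) = ∑ n ∈ Finset.range (sInf S), 1 := by simp
      _ ≤ ∑ n ∈ Finset.range (sInf S), (B n).indicator (fun _ => (1:ℝ≥0∞)) ω := by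
          refine Finset.sum_le_sum fun n hn => ?_
          rw [Set.indicator_of_mem (key n (Finset.mem_range.1 hn))]
      _ ≤ ∑' n, (B n).indicator (fun _ => (1:ℝ≥0∞)) ω := ENNReal.sum_le_tsum _
    have hstep : ∫⁻ ω, ((sInf {j' : ℕ | 2 ≤ j' ∧ ∃ i, X 1 ω i < X j' ω i} : ℕ) : ℝ≥0∞) ∂P ≤
        ∑' n, P (B n) := by
      calc ∫⁻ ω, ((sInf {j' : ℕ | 2 ≤ j' ∧ ∃ i, X 1 ω i < X j' ω i} : ℕ) : ℝ≥0∞) ∂P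
          ≤ ∫⁻ ω, ∑' n, (B n).indicator (fun _ => (1:ℝ≥0∞)) ω ∂P := lintegral_mono hpoint
      _ = ∑' n, ∫⁻ ω, (B n).indicator (fun _ => (1:ℝ≥0∞)) ω ∂P :=
          lintegral_tsum (fun n => (measurable_const.indicator (hBmeas n)).aemeasurable)
      _ = ∑' n, P (B n) := by
          refine tsum_congr fun n => ?_
          rw [lintegral_indicator (hBmeas n)]
          simp [setLIntegral_const]
    have hPB : ∀ n, P (B n) ≤ (if n < N₀ then (1:ℝ≥0∞) else 0) +
        (ENNReal.ofReal ((n:ℝ) ^ (-(a*b))) + 2 * ENNReal.ofReal ((1 - (n:ℝ) ^ (-b)) ^ n)) := by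
      intro n
      by_cases hn0 : n < N₀
      · simp only [hBdef, if_pos hn0, measure_univ]
        exact le_self_add
      · push_neg at hn0
        obtain ⟨hv_u, hu_1, hn1⟩ := hun n hn0
        have hu0 : 0 ≤ u n := le_trans hv0 hv_u.le
        have hone : ∀ (m : ℕ) (i : Fin d), P (X m ⁻¹' {x | x i ≤ u n}) = ENNReal.ofReal (u n) := by
          intro m i
          rw [← Measure.map_apply (hmeas m) (hmeask i _), hident m 1,
            Measure.map_apply (hmeas 1) (hmeask i _)]
          exact hunif i (u n) ⟨hu0, hu_1.le⟩
        have hprod : ∀ (i : Fin d), P (⋂ m ∈ Finset.Icc 1 n, X m ⁻¹' {x | x i ≤ u n}) =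
            ENNReal.ofReal ((u n) ^ n) := by
          intro i
          rw [hindep.measure_inter_preimage_eq_mul (Finset.Icc 1 n)
            (fun m _ => hmeask i (u n))]
          rw [Finset.prod_congr rfl (fun m _ => hone m i), Finset.prod_const, Nat.card_Icc,
            ENNReal.ofReal_pow hu0]
          norm_num
        have hDpair : P (X 1 ⁻¹' {x | u n < x k ∧ u n < x j}) ≤
            ENNReal.ofReal ((n:ℝ) ^ (-(a*b))) := by
          have heq : X 1 ⁻¹' {x | u n < x k ∧ u n < x j} =
              {ω | u n < X 1 ω k ∧ u n < X 1 ω j} := rfl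
          rw [heq]
          refine le_trans (hbound' (u n) hv_u hu_1) (le_of_eq ?_)
          congr 1
          have h1u : (1 : ℝ) - u n = (n:ℝ) ^ (-b) := by simp [hudef]
          rw [h1u, ← Real.rpow_mul (Nat.cast_nonneg n)]  -- gives (n ^ (-b*a)) ... direction
          ring_nf
        have hun_eq : (u n) ^ n = (1 - (n:ℝ) ^ (-b)) ^ n := by rw [hudef]
        simp only [hBdef, if_neg (not_lt.2 hn0)]
        calc P ((X 1 ⁻¹' {x | u n < x k ∧ u n < x j}) ∪
              (⋂ m ∈ Finset.Icc 1 n, X m ⁻¹' {x | x k ≤ u n}) ∪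
              (⋂ m ∈ Finset.Icc 1 n, X m ⁻¹' {x | x j ≤ u n}))
            ≤ P ((X 1 ⁻¹' {x | u n < x k ∧ u n < x j}) ∪
              (⋂ m ∈ Finset.Icc 1 n, X m ⁻¹' {x | x k ≤ u n})) +
              P (⋂ m ∈ Finset.Icc 1 n, X m ⁻¹' {x | x j ≤ u n}) := measure_union_le _ _
        _ ≤ (P (X 1 ⁻¹' {x | u n < x k ∧ u n < x j}) +
              P (⋂ m ∈ Finset.Icc 1 n, X m ⁻¹' {x | x k ≤ u n})) +
              P (⋂ m ∈ Finset.Icc 1 n, X m ⁻¹' {x | x j ≤ u n}) :=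
            add_le_add_left (measure_union_le _ _) _
        _ = P (X 1 ⁻¹' {x | u n < x k ∧ u n < x j}) +
              (ENNReal.ofReal ((1 - (n:ℝ) ^ (-b)) ^ n) + ENNReal.ofReal ((1 - (n:ℝ) ^ (-b)) ^ n)) := by
            rw [hprod k, hprod j, hun_eq]; ring
        _ ≤ ENNReal.ofReal ((n:ℝ) ^ (-(a*b))) + 2 * ENNReal.ofReal ((1 - (n:ℝ) ^ (-b)) ^ n) := by
            refine add_le_add hDpair (le_of_eq ?_)
            rw [two_mul]
        _ ≤ _ := le_add_self
    refine lt_of_le_of_lt hstep (lt_of_le_of_lt (ENNReal.tsum_le_tsum hPB) ?_)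
    rw [ENNReal.tsum_add]
    refine ENNReal.add_lt_top.2 ⟨?_, ?_⟩
    · have heq : ∑' n : ℕ, (if n < N₀ then (1:ℝ≥0∞) else 0) =
          ∑ n ∈ Finset.range N₀, (if n < N₀ then (1:ℝ≥0∞) else 0) :=
        tsum_eq_sum (fun n hn => if_neg (by simp only [Finset.mem_range] at hn; omega))
      rw [heq]
      exact ENNReal.sum_lt_top.2 (fun n _ => by split <;> simp)
    · rw [ENNReal.tsum_add]
      refine ENNReal.add_lt_top.2 ⟨?_, ?_⟩
      · rw [← ENNReal.ofReal_tsum_of_nonneg (fun n => Real.rpow_nonneg (Nat.cast_nonneg n) _)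
          (Real.summable_nat_rpow.2 (by linarith))]
        exact ENNReal.ofReal_lt_top
      · rw [ENNReal.tsum_mul_left]
        refine ENNReal.mul_lt_top (by norm_num) ?_
        rw [← ENNReal.ofReal_tsum_of_nonneg (aux_nonneg hb0) (aux_summable_pow hb0 hb1)]
        exact ENNReal.ofReal_lt_top
end
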